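/- arXiv:2411.09672 — 5 statements merged into one kernel-verified Lean document; each statement's English description precedes it below -/
import Mathlib

section
/- Let G be a finite simple graph that is connected and has at least one edge. Then the tangent graph tG equals the complete tangent graph τG (i.e., they have the same edges on the common vertex set of darts of G) if and only if G is a star graph K_{1,n} with n ≥ 1, i.e., there exists a vertex c such that every edge of G is incident to c. -/
open Finset SimpleGraph

/-- The tangent graph `tG` of a simple graph `G`: vertices are the darts of `G`,
with `u, v` adjacent iff `π₊(u) = π(v)` or `π(u) = π₊(v)`. -/
def tangentGraph {V : Type*} (G : SimpleGraph V) : SimpleGraph G.Dart where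
  Adj u v := u.snd = v.fst ∨ u.fst = v.snd
  symm := ⟨fun u v h => h.symm.imp Eq.symm Eq.symm⟩
  loopless := ⟨fun u h => h.elim (fun h1 => u.snd_ne_fst h1) (fun h2 => u.fst_ne_snd h2)⟩

/-- The complete tangent graph `τG` of a simple graph `G`: vertices are the darts of `G`,
with `u, v` adjacent iff their base points are adjacent in `G`. -/
def completeTangentGraph {V : Type*} (G : SimpleGraph V) : SimpleGraph G.Dart where
  Adj u v := G.Adj u.fst v.fst
  symm := ⟨fun u v h => h.symm⟩
  loopless := ⟨fun u h => G.loopless.irrefl _ h⟩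

instance {V : Type*} [DecidableEq V] (G : SimpleGraph V) :
    DecidableRel (tangentGraph G).Adj :=
  fun u v => inferInstanceAs (Decidable (u.snd = v.fst ∨ u.fst = v.snd))

instance {V : Type*} (G : SimpleGraph V) [DecidableRel G.Adj] :
    DecidableRel (completeTangentGraph G).Adj :=
  fun u v => inferInstanceAs (Decidable (G.Adj u.fst v.fst))

/-- The darts of `G` based at the vertex `i`. -/
def dartsAt {V : Type*} [Fintype V] [DecidableEq V] (G : SimpleGraph V)
    [DecidableRel G.Adj] (i : V) : Finset G.Dart :=
  Finset.univ.filter fun u => u.fst = i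

/-- The coefficient function `dφ` of the gradient of `φ`. -/
def dop {V : Type*} (G : SimpleGraph V) (φ : V → ℝ) (u : G.Dart) : ℝ :=
  φ u.snd - φ u.fst

/-- The Laplacian of `φ : V → ℝ` on `G`, `Δφ(i) = -2·Σ_{π(u)=i} dφ(u)`. -/
def gLap {V : Type*} [Fintype V] [DecidableEq V] (G : SimpleGraph V)
    [DecidableRel G.Adj] (φ : V → ℝ) (i : V) : ℝ :=
  -2 * ∑ u ∈ dartsAt G i, dop G φ u

/-- The Laplacian of a real function on the vertices of an arbitrary finite simple graph:
`Δ_H h(x) = -2·Σ_{y ~ x} (h y - h x)`. -/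
def lap {W : Type*} [Fintype W] (H : SimpleGraph W) [DecidableRel H.Adj]
    (h : W → ℝ) (x : W) : ℝ :=
  -2 * ∑ y ∈ H.neighborFinset x, (h y - h x)

/-- The divergence of `f : Darts(G) → ℝ`, `Div f(i) = Σ_{π(u)=i} (f(ū) - f(u))`. -/
def divg {V : Type*} [Fintype V] [DecidableEq V] (G : SimpleGraph V)
    [DecidableRel G.Adj] (f : G.Dart → ℝ) (i : V) : ℝ :=
  ∑ u ∈ dartsAt G i, (f u.symm - f u)

/-!
Always `tG ≤ τG`, and darts `(x, w)`, `(y, z)` adjacent in `τG` but not in `tG` are exactly a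
trail `w - x - y - z` of length three. Without such trails every edge has an endpoint of degree
one; the other endpoint `c` then has only leaves as neighbours, so by connectivity every vertex
is `c` or a leaf at `c`. Conversely, in a star every walk of length three backtracks.
-/

theorem tangentGraph_le_completeTangentGraph {V : Type*} (G : SimpleGraph V) :
    tangentGraph G ≤ completeTangentGraph G := by
  rintro ⟨⟨x, w⟩, hxw⟩ ⟨⟨y, z⟩, hyz⟩ (rfl | rfl : w = y ∨ x = z)
  · exact hxw
  · exact hyz.symm

theorem tangentGraph_eq_completeTangentGraph_iff {V : Type*} (G : SimpleGraph V) :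
    tangentGraph G = completeTangentGraph G ↔
      ∀ w x y z, G.Adj w x → G.Adj x y → G.Adj y z → w = y ∨ x = z := by
  constructor
  · intro h w x y z hwx hxy hyz
    have hadj : (tangentGraph G).Adj ⟨(x, w), hwx.symm⟩ ⟨(y, z), hyz⟩ := by
      rw [h]
      exact hxy
    exact hadj
  · intro h
    refine le_antisymm (tangentGraph_le_completeTangentGraph G) ?_
    rintro ⟨⟨x, w⟩, hxw⟩ ⟨⟨y, z⟩, hyz⟩ (hxy : G.Adj x y)
    exact h w x y z hxw.symm hxy hyz

section NoTrailOfLengthThree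

variable {V : Type*} {G : SimpleGraph V}

theorem forall_adj_eq_or_eq_of_forall_adj_eq_center {c : V}
    (hc : ∀ i j, G.Adj i j → i = c ∨ j = c) :
    ∀ w x y z, G.Adj w x → G.Adj x y → G.Adj y z → w = y ∨ x = z := by
  intro w x y z hwx hxy hyz
  by_cases hx : x = c
  · subst hx
    exact Or.inr ((hc y z hyz).resolve_left hxy.ne.symm).symm
  · exact Or.inl (((hc w x hwx).resolve_right hx).trans ((hc x y hxy).resolve_left hx).symm)

variable (h : ∀ w x y z, G.Adj w x → G.Adj x y → G.Adj y z → w = y ∨ x = z)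
include h

theorem neighborSet_subset_or_neighborSet_subset {x y : V} (hxy : G.Adj x y) :
    G.neighborSet x ⊆ {y} ∨ G.neighborSet y ⊆ {x} := by
  by_contra! hne
  obtain ⟨w, hxw, hwy⟩ := Set.not_subset.mp hne.1
  obtain ⟨z, hyz, hzx⟩ := Set.not_subset.mp hne.2
  exact (h w x y z (G.adj_symm hxw) hxy hyz).elim hwy (Ne.symm hzx)

theorem forall_adj_neighborSet_subset_of_neighborSet_subset {a b : V} (hab : G.Adj a b)
    (ha : G.neighborSet a ⊆ {b}) : ∀ y, G.Adj b y → G.neighborSet y ⊆ {b} := by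
  intro y hby
  refine (neighborSet_subset_or_neighborSet_subset h hby).elim (fun hb => ?_) id
  obtain rfl : a = y := hb hab.symm
  exact ha

theorem exists_forall_adj_neighborSet_subset [Nonempty V] :
    ∃ c, ∀ y, G.Adj c y → G.neighborSet y ⊆ {c} := by
  by_cases hedge : ∃ a b, G.Adj a b
  · obtain ⟨a, b, hab⟩ := hedge
    rcases neighborSet_subset_or_neighborSet_subset h hab with ha | hb
    · exact ⟨b, forall_adj_neighborSet_subset_of_neighborSet_subset h hab ha⟩
    · exact ⟨a, forall_adj_neighborSet_subset_of_neighborSet_subset h hab.symm hb⟩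
  · exact ⟨Classical.arbitrary V, fun y hy => (hedge ⟨_, y, hy⟩).elim⟩

end NoTrailOfLengthThree

theorem SimpleGraph.Connected.forall_adj_eq_center {V : Type*} {G : SimpleGraph V}
    (hconn : G.Connected) {c : V} (hc : ∀ y, G.Adj c y → G.neighborSet y ⊆ {c}) :
    ∀ i j, G.Adj i j → i = c ∨ j = c := by
  have hnear : ∀ v, v = c ∨ G.Adj c v := by
    intro v
    induction (reachable_iff_reflTransGen c v).mp (hconn c v) with
    | refl => exact Or.inl rfl
    | tail _ hyz ih =>
      rcases ih with rfl | hcy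
      · exact Or.inr hyz
      · exact Or.inl (hc _ hcy hyz)
  intro i j hij
  exact (hnear i).imp_right fun hci => hc i hci hij

theorem tangentGraph_eq_completeTangentGraph_iff_star_general {V : Type*}
    (G : SimpleGraph V) (hconn : G.Connected) :
    tangentGraph G = completeTangentGraph G ↔
      ∃ c : V, ∀ i j : V, G.Adj i j → i = c ∨ j = c := by
  rw [tangentGraph_eq_completeTangentGraph_iff]
  constructor
  · intro h
    have : Nonempty V := hconn.nonempty
    obtain ⟨c, hc⟩ := exists_forall_adj_neighborSet_subset h
    exact ⟨c, hconn.forall_adj_eq_center hc⟩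
  · rintro ⟨c, hc⟩
    exact forall_adj_eq_or_eq_of_forall_adj_eq_center hc

/-- For a connected graph with at least one edge, `tG = τG` iff `G` is a
star graph `K_{1,n}`, `n ≥ 1`, i.e. some vertex `c` is incident to every edge of `G`. -/
theorem tangentGraph_eq_completeTangentGraph_iff_star {V : Type*} [Fintype V]
    (G : SimpleGraph V) (hconn : G.Connected) (hedge : ∃ i j : V, G.Adj i j) :
    tangentGraph G = completeTangentGraph G ↔
      ∃ c : V, ∀ i j : V, G.Adj i j → i = c ∨ j = c :=
  tangentGraph_eq_completeTangentGraph_iff_star_general G hconn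
end

section
/- Let H and K be finite simple graphs and let h : H → K be a graph homomorphism. Define the differential dh on darts of H by dh(u) = (h(π(u)), h(π₊(u))), which is a dart of K. Then dh is a graph homomorphism from the tangent graph tH to the tangent graph tK: whenever darts u, v are adjacent in tH, the darts dh(u), dh(v) are adjacent in tK. -/
open Finset SimpleGraph

/-- The differential `dh : tH →g tK` of a graph homomorphism `h : H →g K`. -/
def SimpleGraph.Hom.tangentMap {V W : Type*} {H : SimpleGraph V} {K : SimpleGraph W}
    (h : H →g K) : tangentGraph H →g tangentGraph K where
  toFun := h.mapDart
  map_rel' huv := huv.imp (congrArg h) (congrArg h)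

theorem mapDart_hom_tangentGraph_general {VH VK : Type*}
    (H : SimpleGraph VH) (K : SimpleGraph VK) (h : H →g K)
    (u v : H.Dart) (huv : (tangentGraph H).Adj u v) :
    (tangentGraph K).Adj (h.mapDart u) (h.mapDart v) :=
  h.tangentMap.map_adj huv

/-- The differential of a graph homomorphism `h : H → K` is a graph
homomorphism `dh : tH → tK`. -/
theorem mapDart_hom_tangentGraph {VH VK : Type*} [Fintype VH] [Fintype VK]
    (H : SimpleGraph VH) (K : SimpleGraph VK) (h : H →g K)
    (u v : H.Dart) (huv : (tangentGraph H).Adj u v) :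
    (tangentGraph K).Adj (h.mapDart u) (h.mapDart v) :=
  mapDart_hom_tangentGraph_general H K h u v huv
end

section
/- Let G be a finite simple graph. Then twice the number of edges of the complete tangent graph τG equals Σ over ordered pairs (i, j) of adjacent vertices of G of deg_G(i)·deg_G(j); equivalently, 2·|E(τG)| = Σ_{i ∈ V} deg_G(i) · (Σ_{j adjacent to i} deg_G(j)). -/
/-!
The darts based at a vertex `j` number `deg_G(j)`, so a dart `u` has `τG`-degree
`Σ_{j ~ π(u)} deg_G(j)`; grouping the darts by base point then turns the degree sum of `τG`,
which is `2·|E(τG)|` by the handshake lemma, into `Σ_i deg_G(i) · Σ_{j ~ i} deg_G(j)`.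
-/

open Finset SimpleGraph

namespace SimpleGraph

variable {V : Type*} [Fintype V] (G : SimpleGraph V) [DecidableRel G.Adj]

theorem sum_dart_fst {M : Type*} [AddCommMonoid M] (f : V → M) :
    ∑ d : G.Dart, f d.fst = ∑ v, G.degree v • f v := by
  classical
  rw [← sum_fiberwise univ (fun d : G.Dart => d.fst)]
  refine sum_congr rfl fun v _ => ?_
  rw [sum_congr rfl fun d hd => by rw [(mem_filter.1 hd).2], sum_const]
  congr 1
  convert G.dart_fst_fiber_card_eq_degree v

theorem card_filter_dart_fst_mem [DecidableEq V] (s : Finset V) :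
    #{d : G.Dart | d.fst ∈ s} = ∑ v ∈ s, G.degree v := by
  rw [card_filter, G.sum_dart_fst fun v => if v ∈ s then 1 else 0]
  simp [sum_ite_mem]

end SimpleGraph

theorem degree_completeTangentGraph {V : Type*} [Fintype V] (G : SimpleGraph V)
    [DecidableRel G.Adj] (u : G.Dart) :
    (completeTangentGraph G).degree u = ∑ j ∈ G.neighborFinset u.fst, G.degree j := by
  classical
  rw [← card_neighborFinset_eq_degree, ← G.card_filter_dart_fst_mem]
  congr 1
  ext v
  simp only [mem_neighborFinset, mem_filter, mem_univ, true_and]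
  rfl

theorem card_edges_completeTangentGraph_general {V : Type*} [Fintype V]
    (G : SimpleGraph V) [DecidableRel G.Adj] :
    2 * (completeTangentGraph G).edgeFinset.card
      = ∑ i : V, G.degree i * ∑ j ∈ G.neighborFinset i, G.degree j := by
  rw [← sum_degrees_eq_twice_card_edges]
  simp only [degree_completeTangentGraph]
  exact G.sum_dart_fst fun i => ∑ j ∈ G.neighborFinset i, G.degree j

/-- `2·|E_{τG}| = Σ_i deg_G(i) · (A deg)(i)`. -/
theorem card_edges_completeTangentGraph {V : Type*} [Fintype V] [DecidableEq V]
    (G : SimpleGraph V) [DecidableRel G.Adj] :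
    2 * (completeTangentGraph G).edgeFinset.card
      = ∑ i : V, G.degree i * ∑ j ∈ G.neighborFinset i, G.degree j :=
  card_edges_completeTangentGraph_general G
end

section
/- Let G be a finite simple graph and let M : V → V → ℝ satisfy: (i) M(i, j) = 0 whenever i ≠ j and i, j are not adjacent in G; and (ii) for every ψ : V → ℝ that is constant on each connected component of G (i.e., ψ(i) = ψ(j) whenever i and j are joined by a walk) and every vertex i, Σ_{j ∈ V} M(i, j)·ψ(j) = 0. Then for every φ : V → ℝ and every vertex i, Σ_{j ∈ V} M(i, j)·φ(j) = Σ_{u : π(u) = i} M(π(u), π₊(u))·dφ(u), the last sum ranging over darts based at i. In particular every first order differential operator on G is given by a vector field X(u) = M(π(u), π₊(u)) acting by Xφ(i) = Σ_{π(u)=i} X(u)·dφ(u). -/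
open Finset SimpleGraph

/-! Subtracting from `φ` the function equal to `φ i` on the component of `i` and to `0`
elsewhere does not change `∑ j, M i j * φ j`, by (ii). The new function vanishes at `i`, so
by (i) only the neighbours `j` of `i` contribute, each with the weight `φ j - φ i`. -/

theorem SimpleGraph.sum_dartsAt {V β : Type*} [Fintype V] [DecidableEq V] [AddCommMonoid β]
    (G : SimpleGraph V) [DecidableRel G.Adj] (f : V → V → β) (i : V) :
    ∑ u ∈ dartsAt G i, f u.fst u.snd = ∑ j ∈ G.neighborFinset i, f i j := by
  rw [dartsAt, G.dart_fst_fiber, sum_image fun _ _ _ _ h => G.dartOfNeighborSet_injective i h]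
  exact (sum_subtype _ (fun j => G.mem_neighborFinset i j) (f i)).symm

theorem SimpleGraph.Reachable.ite_eq_ite {V α : Type*} {G : SimpleGraph V}
    [DecidableRel G.Reachable] [Zero α] {a b : V} (hab : G.Reachable a b) (i : V) (c : α) :
    (if G.Reachable i a then c else 0) = (if G.Reachable i b then c else 0) := by
  congr 1
  exact propext ⟨fun h => h.trans hab, fun h => h.trans hab.symm⟩

section FirstOrderOperator

variable {V : Type*} [Fintype V] {G : SimpleGraph V} {M : V → V → ℝ}

theorem sum_mul_eq_sum_mul_sub_of_annihilates_locallyConstant [DecidableRel G.Reachable]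
    (h2 : ∀ ψ : V → ℝ, (∀ i j : V, G.Reachable i j → ψ i = ψ j) →
        ∀ i : V, ∑ j : V, M i j * ψ j = 0)
    (φ : V → ℝ) (i : V) :
    ∑ j, M i j * φ j = ∑ j, M i j * (φ j - if G.Reachable i j then φ i else 0) := by
  have hψ := h2 (fun j => if G.Reachable i j then φ i else 0)
    (fun _ _ hab => hab.ite_eq_ite i (φ i)) i
  simp only [mul_sub, sum_sub_distrib, hψ, sub_zero]

theorem sum_mul_eq_sum_neighborFinset_mul [DecidableEq V] [DecidableRel G.Adj]
    (h1 : ∀ i j : V, i ≠ j → ¬G.Adj i j → M i j = 0) {g : V → ℝ} {i : V} (hg : g i = 0) :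
    ∑ j, M i j * g j = ∑ j ∈ G.neighborFinset i, M i j * g j := by
  refine (sum_subset (subset_univ _) fun j _ hj => ?_).symm
  rcases eq_or_ne i j with rfl | hij
  · rw [hg, mul_zero]
  · rw [h1 i j hij (by simpa using hj), zero_mul]

end FirstOrderOperator

/-- Every first order differential operator `M` on `G` is given by the
vector field `X(u) = M(π(u), π₊(u))` acting by `Xφ(i) = Σ_{π(u)=i} X(u)·dφ(u)`. -/
theorem firstOrder_operator_eq_vectorField {V : Type*} [Fintype V] [DecidableEq V]
    (G : SimpleGraph V) [DecidableRel G.Adj] (M : V → V → ℝ)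
    (h1 : ∀ i j : V, i ≠ j → ¬G.Adj i j → M i j = 0)
    (h2 : ∀ ψ : V → ℝ, (∀ i j : V, G.Reachable i j → ψ i = ψ j) →
        ∀ i : V, ∑ j : V, M i j * ψ j = 0)
    (φ : V → ℝ) (i : V) :
    ∑ j : V, M i j * φ j = ∑ u ∈ dartsAt G i, M u.fst u.snd * dop G φ u := by
  classical
  have hdarts : ∑ u ∈ dartsAt G i, M u.fst u.snd * dop G φ u =
      ∑ j ∈ G.neighborFinset i, M i j * (φ j - φ i) :=
    G.sum_dartsAt (fun a b => M a b * (φ b - φ a)) i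
  rw [hdarts, sum_mul_eq_sum_mul_sub_of_annihilates_locallyConstant h2,
    sum_mul_eq_sum_neighborFinset_mul h1 (by simp)]
  refine sum_congr rfl fun j hj => ?_
  rw [if_pos ((G.mem_neighborFinset i j).1 hj).reachable]
end

section
/- Let G be a finite simple graph and φ : V → ℝ. Then for every vertex i, Div(Δ_{tG}(dφ))(i) = Δ(Δφ)(i) − 4·Δφ(i) − 4·Σ_{u : π(u) = i} (deg_G(π₊(u)) + deg_G(π(u)))·dφ(u), where dφ : Darts(G) → ℝ is the coefficient function of the gradient ∇φ, Δ_{tG} is the Laplacian of the tangent graph tG acting on functions on Darts(G), and Div f(i) = Σ_{u : π(u) = i} (f(ū) − f(u)). -/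
open Finset SimpleGraph

/-!
Counting the neighbours of a dart `u` in `tG` (the darts leaving `π₊(u)` and the reverses of
those leaving `π(u)`, overlapping in `ū`) gives the pointwise formula
`Δ_{tG}(dφ)(u) = d(Δφ)(u) + (2(deg π₊(u) + deg π(u)) - 4)·dφ(u)`.
Its right-hand side changes sign under `u ↦ ū`, so its divergence at `i` is `-2` times its sum
over the darts based at `i`, and that sum is read off in terms of `Δ²φ(i)` and `Δφ(i)`.
-/

namespace SimpleGraph

variable {V : Type*}

lemma dop_symm (G : SimpleGraph V) (φ : V → ℝ) (u : G.Dart) :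
    dop G φ u.symm = -dop G φ u :=
  (neg_sub _ _).symm

variable [Fintype V] [DecidableEq V] (G : SimpleGraph V) [DecidableRel G.Adj]

lemma card_dartsAt (i : V) : #(dartsAt G i) = G.degree i :=
  G.dart_fst_fiber_card_eq_degree i

lemma sum_filter_snd_eq_sum_dartsAt_symm {M : Type*} [AddCommMonoid M] (f : G.Dart → M)
    (j : V) : ∑ v with v.snd = j, f v = ∑ w ∈ dartsAt G j, f w.symm :=
  sum_nbij' Dart.symm Dart.symm (by simp [dartsAt]) (by simp [dartsAt])
    (fun v _ => v.symm_symm) (fun w _ => w.symm_symm) (fun v _ => by rw [v.symm_symm])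

lemma neighborFinset_tangentGraph (u : G.Dart) :
    (tangentGraph G).neighborFinset u = dartsAt G u.snd ∪ univ.filter fun v => v.snd = u.fst := by
  ext v
  simp only [mem_neighborFinset, dartsAt, mem_union, mem_filter, mem_univ, true_and]
  exact or_congr eq_comm eq_comm

lemma dartsAt_inter_filter_snd (u : G.Dart) :
    dartsAt G u.snd ∩ univ.filter fun v => v.snd = u.fst = {u.symm} := by
  ext v
  simp only [dartsAt, mem_inter, mem_filter, mem_univ, true_and, mem_singleton]
  exact ⟨fun ⟨h₁, h₂⟩ => Dart.ext _ _ (Prod.ext h₁ h₂), by rintro rfl; exact ⟨rfl, rfl⟩⟩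

lemma sum_neighborFinset_tangentGraph {M : Type*} [AddCommGroup M] (f : G.Dart → M)
    (u : G.Dart) :
    ∑ v ∈ (tangentGraph G).neighborFinset u, f v
      = ∑ v ∈ dartsAt G u.snd, f v + ∑ w ∈ dartsAt G u.fst, f w.symm - f u.symm := by
  rw [← sum_filter_snd_eq_sum_dartsAt_symm, neighborFinset_tangentGraph, eq_sub_iff_add_eq,
    ← sum_singleton f u.symm, ← dartsAt_inter_filter_snd]
  exact sum_union_inter

lemma sum_dartsAt_dop (φ : V → ℝ) (i : V) :
    ∑ u ∈ dartsAt G i, dop G φ u = -gLap G φ i / 2 := by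
  rw [gLap]
  ring

lemma lap_tangentGraph_dop (φ : V → ℝ) (u : G.Dart) :
    lap (tangentGraph G) (dop G φ) u
      = dop G (gLap G φ) u
        + (2 * ((G.degree u.snd : ℝ) + (G.degree u.fst : ℝ)) - 4) * dop G φ u := by
  rw [lap, sum_neighborFinset_tangentGraph]
  simp only [sum_sub_distrib, sum_const, card_dartsAt, nsmul_eq_mul, dop_symm, sum_neg_distrib,
    sum_dartsAt_dop]
  rw [dop, dop]
  ring

lemma lap_tangentGraph_dop_symm (φ : V → ℝ) (u : G.Dart) :
    lap (tangentGraph G) (dop G φ) u.symm = -lap (tangentGraph G) (dop G φ) u := by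
  -- `Dart.symm_toProd` cannot rewrite under `G.degree`, whose `Fintype` instance depends on
  -- the vertex, so the endpoints of `ū` are identified definitionally.
  rw [lap_tangentGraph_dop, lap_tangentGraph_dop, dop_symm, dop_symm,
    show G.degree u.symm.fst = G.degree u.snd from rfl,
    show G.degree u.symm.snd = G.degree u.fst from rfl]
  ring

lemma divg_eq_of_symm_eq_neg {f : G.Dart → ℝ} (hf : ∀ u, f u.symm = -f u) (i : V) :
    divg G f i = -2 * ∑ u ∈ dartsAt G i, f u := by
  rw [divg, mul_sum]
  exact sum_congr rfl fun u _ => by rw [hf]; ring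

end SimpleGraph

/-- `Div Δ_{tG} ∇φ(i) = Δ²φ(i) - 4Δφ(i) - 4Dφ(i)` where
`D(u) = deg(π₊(u)) + deg(π(u))`. -/
theorem div_lapTangent_grad {V : Type*} [Fintype V] [DecidableEq V]
    (G : SimpleGraph V) [DecidableRel G.Adj] (φ : V → ℝ) (i : V) :
    divg G (lap (tangentGraph G) (dop G φ)) i
      = gLap G (gLap G φ) i - 4 * gLap G φ i
        - 4 * ∑ u ∈ dartsAt G i,
            ((G.degree u.snd : ℝ) + (G.degree u.fst : ℝ)) * dop G φ u := by
  rw [divg_eq_of_symm_eq_neg G (lap_tangentGraph_dop_symm G φ)]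
  simp only [lap_tangentGraph_dop, sum_add_distrib, sub_mul, sum_sub_distrib, mul_assoc,
    ← mul_sum, sum_dartsAt_dop]
  ring
end
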